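/- arXiv:1111.1211 — 5 statements merged into one kernel-verified Lean document; each statement's English description precedes it below -/
import Mathlib

section
/- A structure with two binary operations + and · satisfying: both operations are associative and commutative, · distributes over +, there exist two distinct elements, for all x, y there exists u with x + u = y, and for all x, y with x + x ≠ x there exists u with x · u = y — is a field. In particular, there exists an additive identity 0 and a multiplicative identity 1, every element has an additive inverse, and every element x with x ≠ 0 has a multiplicative inverse. -/
/-- A structure with two associative, commutative binary operations `+` and `·`,
where `·` distributes over `+`, with at least two elements, in which subtraction
is always possible and division by any `x` with `x + x ≠ x` is always possible,
is a field: there are additive and multiplicative identities, additive inverses,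
and multiplicative inverses for all nonzero elements. -/
theorem field_axioms_pi2
    (M : Type*) (add mul : M → M → M)
    (addAssoc : ∀ x y z, add (add x y) z = add x (add y z))
    (addComm : ∀ x y, add x y = add y x)
    (mulAssoc : ∀ x y z, mul (mul x y) z = mul x (mul y z))
    (mulComm : ∀ x y, mul x y = mul y x)
    (distribLeft : ∀ x y z, mul x (add y z) = add (mul x y) (mul x z))
    (distribRight : ∀ x y z, mul (add x y) z = add (mul x z) (mul y z))
    (twoElts : ∃ x y : M, x ≠ y)
    (sub : ∀ x y, ∃ u, add x u = y)
    (div : ∀ x y, add x x ≠ x → ∃ u, mul x u = y) :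
    ∃ zero one : M,
      (∀ x, add x zero = x) ∧
      (∀ x, ∃ u, add x u = zero) ∧
      (∀ x, mul x one = x) ∧
      (∀ x, x ≠ zero → ∃ u, mul x u = one) := by
  obtain ⟨a, b, hab⟩ := twoElts
  obtain ⟨zero, hz⟩ := sub a a
  -- zero is a global additive identity
  have hzero : ∀ x, add x zero = x := by
    intro x
    obtain ⟨u, hu⟩ := sub a x
    calc add x zero = add (add a u) zero := by rw [hu]
      _ = add (add a zero) u := by rw [addAssoc, addAssoc, addComm u zero]
      _ = add a u := by rw [hz]
      _ = x := hu
  -- x + x = x ↔ x = zero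
  have hidem : ∀ x, add x x = x → x = zero := by
    intro x hx
    obtain ⟨u, hu⟩ := sub x zero
    have : add (add x x) u = add x u := by rw [hx]
    rw [addAssoc, hu, hzero] at this
    exact this
  have hzz : add zero zero = zero := hzero zero
  -- mul x zero = zero
  have hmz : ∀ x, mul x zero = zero := by
    intro x
    apply hidem
    rw [← distribLeft, hzz]
  -- a nonzero element exists
  have hne : ∃ c : M, c ≠ zero := by
    by_cases h : a = zero
    · exact ⟨b, fun hb => hab (h.trans hb.symm)⟩
    · exact ⟨a, h⟩
  obtain ⟨c, hc⟩ := hne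
  have hcidem : add c c ≠ c := fun h => hc (hidem c h)
  obtain ⟨one, hone⟩ := div c c hcidem
  have honeall : ∀ x, mul x one = x := by
    intro x
    by_cases hx : x = zero
    · rw [hx, mulComm, hmz]
    · obtain ⟨v, hv⟩ := div c x hcidem
      calc mul x one = mul (mul c v) one := by rw [hv]
        _ = mul (mul c one) v := by rw [mulAssoc, mulAssoc, mulComm v one]
        _ = mul c v := by rw [hone]
        _ = x := hv
  refine ⟨zero, one, hzero, fun x => sub x zero, honeall, ?_⟩
  intro x hx
  exact div x one (fun h => hx (hidem x h))
end

section
/- Two algebraic field extensions E and F of ℚ are isomorphic as fields if and only if every polynomial in ℚ[X] that has a root in E also has a root in F, and vice versa. -/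
/-- Two algebraic extensions of `ℚ` are isomorphic as fields iff every polynomial
over `ℚ` with a root in one has a root in the other. -/
theorem algebraic_fields_iso_iff_same_roots
    (E F : Type*) [Field E] [Field F] [Algebra ℚ E] [Algebra ℚ F]
    [Algebra.IsAlgebraic ℚ E] [Algebra.IsAlgebraic ℚ F] :
    Nonempty (E ≃+* F) ↔
      ∀ p : Polynomial ℚ,
        (∃ x : E, Polynomial.aeval x p = 0) ↔ (∃ y : F, Polynomial.aeval y p = 0) := by
  constructor
  · rintro ⟨e⟩ p
    have hc : ∀ q : ℚ, e (algebraMap ℚ E q) = algebraMap ℚ F q := fun q => by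
      rw [eq_ratCast (algebraMap ℚ E) q, eq_ratCast (algebraMap ℚ F) q]
      exact map_ratCast e q
    let e' : E ≃ₐ[ℚ] F := AlgEquiv.ofRingEquiv (f := e) hc
    constructor
    · rintro ⟨x, hx⟩
      refine ⟨e' x, ?_⟩
      rw [Polynomial.aeval_algEquiv]
      simp [hx]
    · rintro ⟨y, hy⟩
      refine ⟨e'.symm y, ?_⟩
      rw [Polynomial.aeval_algEquiv]
      simp [hy]
  · intro h
    have hset : {p : Polynomial ℚ | ∃ x : E, Polynomial.aeval x p = 0} =
        {p | ∃ y : F, Polynomial.aeval y p = 0} := Set.ext fun p => h p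
    obtain ⟨e⟩ := Field.nonempty_algEquiv_of_aeval_eq_zero_eq (F := ℚ) hset
    exact ⟨e.toRingEquiv⟩
end

section
/- If E and F are algebraic extensions of ℚ such that each one embeds into the other as a field, then E and F are isomorphic. -/
/-- If each of two algebraic extensions of `ℚ` embeds into the other, then they
are isomorphic. -/
theorem algebraic_fields_iso_of_mutual_embeddings
    (E F : Type*) [Field E] [Field F] [Algebra ℚ E] [Algebra ℚ F]
    [Algebra.IsAlgebraic ℚ E] [Algebra.IsAlgebraic ℚ F]
    (f : E →+* F) (g : F →+* E) :
    Nonempty (E ≃+* F) := by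
  have h1 : Function.Bijective ((g.comp f).toRatAlgHom) :=
    Algebra.IsAlgebraic.algHom_bijective _
  have h2 : Function.Bijective ((f.comp g).toRatAlgHom) :=
    Algebra.IsAlgebraic.algHom_bijective _
  have hf : Function.Bijective f := by
    constructor
    · exact f.injective
    · intro y
      obtain ⟨x, hx⟩ := h2.surjective y
      exact ⟨g x, hx⟩
  exact ⟨RingEquiv.ofBijective f hf⟩
end

section
/- Let h(X) ∈ ℚ(√p)[X] be irreducible of odd prime degree d whose splitting field over ℚ(√p) has Galois group S_d, and let h⁻ be the image of h under the conjugation automorphism √p ↦ −√p. If the splitting field of h over the splitting field of h⁻ also has Galois group S_d, then h and h⁻ have no common root, and h⁻ is irreducible over the splitting field of h. -/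
open IntermediateField Polynomial

theorem aux_core {M : Type*} [Field M] {q : M[X]} (hsep : q.Separable)
    {d : ℕ} (hd2 : 2 ≤ d) (hdeg : q.natDegree = d)
    (hcard : Nat.card q.Gal = d.factorial) : Irreducible q := by
  classical
  have hq0 : q ≠ 0 := by
    rintro rfl
    simp only [natDegree_zero] at hdeg
    omega
  have hsplits : (q.map (algebraMap M q.SplittingField)).Splits := SplittingField.splits q
  have hroots : Fintype.card (q.rootSet q.SplittingField) = d := by
    rw [card_rootSet_eq_natDegree hsep hsplits, hdeg]
  let φ : q.Gal →* Equiv.Perm (q.rootSet q.SplittingField) := MulAction.toPermHom _ _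
  have hinj : Function.Injective φ := by
    intro g₁ g₂ hg
    ext x hx
    exact congrArg (fun e : Equiv.Perm (q.rootSet q.SplittingField) =>
      ((e ⟨x, hx⟩ : q.rootSet q.SplittingField) : q.SplittingField)) hg
  have hsurj : Function.Surjective φ := by
    have hcards : Fintype.card q.Gal =
        Fintype.card (Equiv.Perm (q.rootSet q.SplittingField)) := by
      rw [Fintype.card_perm, hroots, ← Nat.card_eq_fintype_card, hcard]
    exact ((Fintype.bijective_iff_injective_and_card φ).mpr ⟨hinj, hcards⟩).surjective
  have htrans : ∀ x y : q.rootSet q.SplittingField, ∃ g : q.Gal, g • x = y := by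
    intro x y
    obtain ⟨g, hg⟩ := hsurj (Equiv.swap x y)
    exact ⟨g, by rw [show g • x = φ g x from rfl, hg, Equiv.swap_apply_left]⟩
  have hne : Nonempty (q.rootSet q.SplittingField) :=
    Fintype.card_pos_iff.mp (by rw [hroots]; omega)
  obtain ⟨x⟩ := hne
  have hxroot : aeval (x : q.SplittingField) q = 0 := (mem_rootSet.mp x.2).2
  have hint : IsIntegral M (x : q.SplittingField) := IsAlgebraic.isIntegral ⟨q, hq0, hxroot⟩
  have hm := minpoly.irreducible hint
  have hm0 : minpoly M (x : q.SplittingField) ≠ 0 := minpoly.ne_zero hint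
  have hdvd : minpoly M (x : q.SplittingField) ∣ q := minpoly.dvd M _ hxroot
  have hsub : (q.rootSet q.SplittingField) ⊆
      ((minpoly M (x : q.SplittingField)).rootSet q.SplittingField) := by
    intro y hy
    obtain ⟨g, hg⟩ := htrans x ⟨y, hy⟩
    rw [mem_rootSet]
    refine ⟨hm0, ?_⟩
    have hyx : y = g (x : q.SplittingField) := by
      have := congrArg Subtype.val hg
      exact this.symm
    rw [hyx, show (g (x : q.SplittingField)) =
      (g : q.SplittingField ≃ₐ[M] q.SplittingField).toAlgHom (x : q.SplittingField) from rfl,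
      aeval_algHom_apply, minpoly.aeval, map_zero]
  have hcardle : d ≤ (minpoly M (x : q.SplittingField)).natDegree := by
    have h1 : Fintype.card (q.rootSet q.SplittingField) ≤
        Fintype.card ((minpoly M (x : q.SplittingField)).rootSet q.SplittingField) :=
      Set.card_le_card hsub
    have h2 : Fintype.card ((minpoly M (x : q.SplittingField)).rootSet q.SplittingField) =
        (minpoly M (x : q.SplittingField)).natDegree :=
      card_rootSet_eq_natDegree (hsep.of_dvd hdvd)
        (Splits.of_dvd hsplits (Polynomial.map_ne_zero hq0) (Polynomial.map_dvd _ hdvd))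
    omega
  obtain ⟨c, hc⟩ := hdvd
  have hc0 : c ≠ 0 := by rintro rfl; rw [mul_zero] at hc; exact hq0 hc
  have hcdeg : c.natDegree = 0 := by
    have := natDegree_mul hm0 hc0
    rw [← hc, hdeg] at this
    omega
  have hcu : IsUnit c := by
    rw [eq_C_of_natDegree_eq_zero hcdeg]
    exact isUnit_C.mpr (isUnit_iff_ne_zero.mpr
      (fun h0 => hc0 (by rw [eq_C_of_natDegree_eq_zero hcdeg, h0, map_zero])))
  exact Associated.irreducible ⟨hcu.unit, by rw [IsUnit.unit_spec, ← hc]⟩ hm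




theorem aux_lift {F A : Type*} [Field F] [Field A] [alg1 : Algebra F A] [IsAlgClosed A]
    [halg : Algebra.IsAlgebraic F A] (γ : F →+* F) :
    ∃ τ : A →+* A, ∀ c, τ (algebraMap F A c) = algebraMap F A (γ c) := by
  have nz1 : @Module.IsTorsionFree F A _ _ alg1.toModule := inferInstance
  letI alg2 : Algebra F A := ((algebraMap F A).comp γ).toAlgebra
  have nz2 : @Module.IsTorsionFree F A _ _ alg2.toModule := inferInstance
  let τ₀ : @AlgHom F A A _ _ _ alg1 alg2 :=
    @IsAlgClosed.lift A _ _ F _ _ A _ _ alg1 alg2 nz1 nz2 halg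
  exact ⟨@AlgHom.toRingHom F A A _ _ _ alg1 alg2 τ₀, fun c => @AlgHom.commutes F A A _ _ _ alg1 alg2 τ₀ c⟩




theorem aux_finrank_le {F A : Type*} [Field F] [Field A] [Algebra F A]
    [Algebra ℚ F] [Algebra ℚ A] [IsScalarTower ℚ F A]
    (τ : A →+* A) (γ : F →+* F) (hτ : ∀ c, τ (algebraMap F A c) = algebraMap F A (γ c))
    (S T : Set A) (hmap : Set.MapsTo τ S T)
    [FiniteDimensional ℚ ↥(adjoin F T)] :
    Module.finrank ℚ ↥(adjoin F S) ≤ Module.finrank ℚ ↥(adjoin F T) := by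
  let P : IntermediateField F A :=
    { Subfield.comap τ (adjoin F T).toSubfield with
      algebraMap_mem' := fun c => by
        show τ (algebraMap F A c) ∈ (adjoin F T).toSubfield
        rw [hτ]
        exact (adjoin F T).algebraMap_mem (γ c) }
  have hle : adjoin F S ≤ P :=
    adjoin_le_iff.mpr fun x hx => (subset_adjoin F T (hmap hx) : τ x ∈ (adjoin F T).toSubfield)
  have hmem : ∀ x : ↥(adjoin F S), τ ↑x ∈ adjoin F T := fun x => hle x.2
  let g : ↥(adjoin F S) →ₗ[ℚ] ↥(adjoin F T) :=
  { toFun := fun x => ⟨τ ↑x, hmem x⟩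
    map_add' := fun x y => Subtype.ext (by push_cast; exact map_add τ _ _)
    map_smul' := fun q x => Subtype.ext (by
      push_cast
      show τ (q • (x : A)) = q • (τ (x : A))
      rw [Algebra.smul_def, Algebra.smul_def, map_mul, eq_ratCast (algebraMap ℚ A) q,
        map_ratCast]) }
  have hg : Function.Injective g := fun x y hxy =>
    Subtype.ext (τ.injective (congrArg Subtype.val hxy))
  exact LinearMap.finrank_le_finrank_of_injective hg




theorem aux_mapsTo {F A : Type*} [Field F] [Field A] [Algebra F A]
    (τ : A →+* A) (γ : F →+* F) (hτ : ∀ c, τ (algebraMap F A c) = algebraMap F A (γ c))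
    (q : F[X]) (hγq : (q.map γ).map (algebraMap F A) ≠ 0) :
    Set.MapsTo τ (q.rootSet A) ((q.map γ).rootSet A) := by
  intro x hx
  rw [mem_rootSet'] at hx ⊢
  refine ⟨hγq, ?_⟩
  have hcomp : (algebraMap F A).comp γ = τ.comp (algebraMap F A) :=
    RingHom.ext fun c => (hτ c).symm
  calc (aeval (τ x)) (q.map γ) = eval₂ (algebraMap F A) (τ x) (q.map γ) := rfl
    _ = eval₂ ((algebraMap F A).comp γ) (τ x) q := eval₂_map _ _ _
    _ = eval₂ (τ.comp (algebraMap F A)) (τ x) q := by rw [hcomp]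
    _ = τ (eval₂ (algebraMap F A) x q) := (hom_eval₂ _ _ _ _).symm
    _ = 0 := by
        rw [show eval₂ (algebraMap F A) x q = aeval x q from rfl, hx.2, map_zero]



open IntermediateField Polynomial

set_option maxHeartbeats 1000000 in
/-- Let `F = ℚ(√p)` with nontrivial automorphism `σ`, `h ∈ F[X]` irreducible of odd
prime degree `d` with splitting field having Galois group `S_d` over `F`, and
`h⁻` the conjugate polynomial. If the splitting field of `h` over the splitting
field of `h⁻` also has Galois group `S_d`, then `h` and `h⁻` have no common root,
and `h⁻` is irreducible over the splitting field of `h`. -/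
theorem conjugate_polynomial_irreducible_over_splitting_field
    (p : ℕ) (hp : p.Prime)
    (F : Type*) [Field F] [Algebra ℚ F]
    (s : F) (hs : s ^ 2 = (p : F))
    (hgen : (⊤ : IntermediateField ℚ F) = IntermediateField.adjoin ℚ {s})
    (σ : F ≃ₐ[ℚ] F) (hσ : σ s = -s)
    (d : ℕ) (hd : d.Prime) (hodd : Odd d)
    (h : Polynomial F) (hirr : Irreducible h) (hdeg : h.natDegree = d)
    (hGalF : Nonempty
      ((↥(IntermediateField.adjoin F (h.rootSet (AlgebraicClosure F))) ≃ₐ[F]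
        ↥(IntermediateField.adjoin F (h.rootSet (AlgebraicClosure F)))) ≃*
       Equiv.Perm (Fin d)))
    (hGalNeg : Nonempty
      ((↥(IntermediateField.extendScalars
            (le_sup_right :
              IntermediateField.adjoin F
                  ((h.map σ.toAlgHom.toRingHom).rootSet (AlgebraicClosure F)) ≤
                IntermediateField.adjoin F (h.rootSet (AlgebraicClosure F)) ⊔
                  IntermediateField.adjoin F
                    ((h.map σ.toAlgHom.toRingHom).rootSet (AlgebraicClosure F)))) ≃ₐ[
          ↥(IntermediateField.adjoin F
              ((h.map σ.toAlgHom.toRingHom).rootSet (AlgebraicClosure F)))]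
        ↥(IntermediateField.extendScalars
            (le_sup_right :
              IntermediateField.adjoin F
                  ((h.map σ.toAlgHom.toRingHom).rootSet (AlgebraicClosure F)) ≤
                IntermediateField.adjoin F (h.rootSet (AlgebraicClosure F)) ⊔
                  IntermediateField.adjoin F
                    ((h.map σ.toAlgHom.toRingHom).rootSet (AlgebraicClosure F))))) ≃*
       Equiv.Perm (Fin d))) :
    (∀ x : AlgebraicClosure F,
        Polynomial.aeval x h = 0 → Polynomial.aeval x (h.map σ.toAlgHom.toRingHom) ≠ 0) ∧
    Irreducible ((h.map σ.toAlgHom.toRingHom).map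
      (algebraMap F ↥(IntermediateField.adjoin F (h.rootSet (AlgebraicClosure F))))) := by
  classical
  have hd2 : 2 ≤ d := hd.two_le
  haveI : CharZero F := charZero_of_injective_algebraMap (algebraMap ℚ F).injective
  set A := AlgebraicClosure F with hA
  set σ' := σ.toAlgHom.toRingHom with hσ'
  set hb := h.map σ' with hhb
  have hirrb : Irreducible hb := by
    rw [hhb]
    have : h.map σ' = Polynomial.mapEquiv σ.toRingEquiv h := rfl
    rw [this]
    exact hirr.map (Polynomial.mapEquiv σ.toRingEquiv)
  have h0 : h ≠ 0 := hirr.ne_zero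
  have hb0 : hb ≠ 0 := hirrb.ne_zero
  have hbdeg : hb.natDegree = d := by
    rw [hhb, natDegree_map, hdeg]
  have hsep : h.Separable := hirr.separable
  have hsepb : hb.Separable := hirrb.separable
  set K := IntermediateField.adjoin F (h.rootSet A) with hK
  set Kn := IntermediateField.adjoin F (hb.rootSet A) with hKn
  have hsplA : (h.map (algebraMap F A)).Splits := IsAlgClosed.splits _
  have hsplAb : (hb.map (algebraMap F A)).Splits := IsAlgClosed.splits _
  haveI spK : Polynomial.IsSplittingField F ↥K h := adjoin_rootSet_isSplittingField hsplA
  haveI spKn : Polynomial.IsSplittingField F ↥Kn hb := adjoin_rootSet_isSplittingField hsplAb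
  haveI : FiniteDimensional F ↥K := Polynomial.IsSplittingField.finiteDimensional ↥K h
  haveI : FiniteDimensional F ↥Kn := Polynomial.IsSplittingField.finiteDimensional ↥Kn hb
  haveI : IsGalois F ↥K := IsGalois.of_separable_splitting_field hsep
  haveI : IsGalois F ↥Kn := IsGalois.of_separable_splitting_field hsepb
  -- roots of the base-changed polynomials
  have hq1A : (h.map (algebraMap F ↥Kn)).map (algebraMap ↥Kn A) = h.map (algebraMap F A) := by
    rw [Polynomial.map_map, ← IsScalarTower.algebraMap_eq]
  have hq2A : (hb.map (algebraMap F ↥K)).map (algebraMap ↥K A) = hb.map (algebraMap F A) := by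
    rw [Polynomial.map_map, ← IsScalarTower.algebraMap_eq]
  have hrs1 : (h.map (algebraMap F ↥Kn)).rootSet A = h.rootSet A := by
    simp only [rootSet, aroots_def, hq1A]
  have hrs2 : (hb.map (algebraMap F ↥K)).rootSet A = hb.rootSet A := by
    simp only [rootSet, aroots_def, hq2A]
  have hsplKn : ((h.map (algebraMap F ↥Kn)).map (algebraMap ↥Kn A)).Splits := by
    rw [Polynomial.map_map, ← IsScalarTower.algebraMap_eq]; exact hsplA
  have hsplK : ((hb.map (algebraMap F ↥K)).map (algebraMap ↥K A)).Splits := by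
    rw [Polynomial.map_map, ← IsScalarTower.algebraMap_eq]; exact hsplAb
  -- the compositum over Kn
  have hKnle : Kn ≤ K ⊔ Kn := le_sup_right
  set ESn := IntermediateField.extendScalars hKnle with hESn
  have hESn_eq : ESn = IntermediateField.adjoin ↥Kn ((h.map (algebraMap F ↥Kn)).rootSet A) := by
    apply IntermediateField.restrictScalars_injective F
    rw [hESn, extendScalars_restrictScalars, restrictScalars_adjoin_eq_sup, hrs1, ← hK, sup_comm]
  haveI spESn : Polynomial.IsSplittingField ↥Kn ↥ESn (h.map (algebraMap F ↥Kn)) := by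
    rw [hESn_eq]
    exact adjoin_rootSet_isSplittingField hsplKn
  haveI : FiniteDimensional ↥Kn ↥ESn :=
    Polynomial.IsSplittingField.finiteDimensional ↥ESn (h.map (algebraMap F ↥Kn))
  haveI : IsGalois ↥Kn ↥ESn :=
    IsGalois.of_separable_splitting_field (hsep.map (f := algebraMap F ↥Kn))
  obtain ⟨en⟩ := hGalNeg
  have hcardESn : Nat.card (↥ESn ≃ₐ[↥Kn] ↥ESn) = d.factorial := by
    rw [Nat.card_congr en.toEquiv, Nat.card_eq_fintype_card, Fintype.card_perm, Fintype.card_fin]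
  have hcardGal1 : Nat.card (h.map (algebraMap F ↥Kn)).Gal = d.factorial := by
    have e := Polynomial.IsSplittingField.algEquiv (L := ↥ESn) (h.map (algebraMap F ↥Kn))
    have h2 : Nat.card (h.map (algebraMap F ↥Kn)).Gal = Nat.card (↥ESn ≃ₐ[↥Kn] ↥ESn) :=
      (Nat.card_congr (AlgEquiv.autCongr e).toEquiv).symm
    rw [h2, hcardESn]
  have hirr1 : Irreducible (h.map (algebraMap F ↥Kn)) :=
    aux_core (hsep.map) hd2 (by rw [natDegree_map, hdeg]) hcardGal1
  -- Goal 1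
  have goal1 : ∀ x : A, aeval x h = 0 → aeval x hb ≠ 0 := by
    intro x hxh hxb
    have hbmapne : hb.map (algebraMap F A) ≠ 0 :=
      (Polynomial.map_ne_zero_iff (algebraMap F A).injective).mpr hb0
    have hxKn : x ∈ Kn := subset_adjoin F _ (by rw [mem_rootSet']; exact ⟨hbmapne, hxb⟩)
    have hroot : Polynomial.aeval (⟨x, hxKn⟩ : ↥Kn) (h.map (algebraMap F ↥Kn)) = 0 := by
      rw [aeval_map_algebraMap]
      apply (algebraMap ↥Kn A).injective
      rw [map_zero, ← Polynomial.aeval_algebraMap_apply]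
      exact hxh
    have hdvd : (X - C (⟨x, hxKn⟩ : ↥Kn)) ∣ h.map (algebraMap F ↥Kn) :=
      dvd_iff_isRoot.mpr (by rw [IsRoot.def, ← coe_aeval_eq_eval]; exact hroot)
    obtain ⟨c, hc⟩ := hdvd
    rcases hirr1.isUnit_or_isUnit hc with h1 | h2
    · exact Polynomial.not_isUnit_X_sub_C _ h1
    · have hXC : (X - C (⟨x, hxKn⟩ : ↥Kn)) ≠ 0 := X_sub_C_ne_zero _
      have hcne : c ≠ 0 := fun h0 => by
        rw [h0, mul_zero] at hc; exact hirr1.ne_zero hc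
      have := natDegree_mul hXC hcne
      rw [← hc, natDegree_map, hdeg, natDegree_X_sub_C, natDegree_eq_zero_of_isUnit h2] at this
      omega
  -- rationals
  haveI : CharZero A := charZero_of_injective_algebraMap (algebraMap F A).injective
  haveI tQFA : IsScalarTower ℚ F A := IsScalarTower.of_algebraMap_eq' (Subsingleton.elim _ _)
  have hsInt : IsIntegral ℚ s := by
    refine ⟨X ^ 2 - C (p : ℚ), monic_X_pow_sub_C _ (by norm_num), ?_⟩
    simp [hs]
  haveI : FiniteDimensional ℚ F := by
    have h2 : (Algebra.adjoin ℚ {s}) = (⊤ : Subalgebra ℚ F) := by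
      rw [← IntermediateField.adjoin_simple_toSubalgebra_of_isAlgebraic hsInt.isAlgebraic, ← hgen]
      exact IntermediateField.top_toSubalgebra
    have h3 : (⊤ : Submodule ℚ F).FG := by
      rw [← Algebra.top_toSubmodule, ← h2]
      exact hsInt.fg_adjoin_singleton
    exact ⟨h3⟩
  haveI : Algebra.IsAlgebraic ℚ F := Algebra.IsAlgebraic.of_finite ℚ F
  haveI : Algebra.IsAlgebraic ℚ A := Algebra.IsAlgebraic.trans ℚ F A
  obtain ⟨τ, hτ⟩ := aux_lift (F := F) (A := A) σ'
  obtain ⟨τ', hτ'⟩ := aux_lift (F := F) (A := A) σ.symm.toAlgHom.toRingHom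
  have hmapsTo1 : Set.MapsTo τ (h.rootSet A) (hb.rootSet A) :=
    aux_mapsTo τ σ' hτ h
      ((Polynomial.map_ne_zero_iff (algebraMap F A).injective).mpr hb0)
  have hbsymm : hb.map σ.symm.toAlgHom.toRingHom = h := by
    rw [hhb, Polynomial.map_map]
    have : (σ.symm.toAlgHom.toRingHom).comp σ' = RingHom.id F :=
      RingHom.ext fun x => σ.symm_apply_apply x
    rw [this, Polynomial.map_id]
  have hmapsTo2 : Set.MapsTo τ' (hb.rootSet A) (h.rootSet A) := by
    have := aux_mapsTo τ' σ.symm.toAlgHom.toRingHom hτ' hb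
      (by rw [hbsymm]
          exact (Polynomial.map_ne_zero_iff (algebraMap F A).injective).mpr h0)
    rwa [hbsymm] at this
  haveI : FiniteDimensional ℚ ↥K := FiniteDimensional.trans ℚ F ↥K
  haveI : FiniteDimensional ℚ ↥Kn := FiniteDimensional.trans ℚ F ↥Kn
  have hfr : Module.finrank ℚ ↥K = Module.finrank ℚ ↥Kn :=
    le_antisymm (by rw [hK, hKn]; exact aux_finrank_le τ σ' hτ _ _ hmapsTo1)
      (by rw [hK, hKn]; exact aux_finrank_le τ' σ.symm.toAlgHom.toRingHom hτ' _ _ hmapsTo2)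
  have hfrF : Module.finrank F ↥K = Module.finrank F ↥Kn := by
    have t1 := Module.finrank_mul_finrank ℚ F ↥K
    have t2 := Module.finrank_mul_finrank ℚ F ↥Kn
    have hpos : 0 < Module.finrank ℚ F := Module.finrank_pos
    rw [← t1, ← t2] at hfr
    exact Nat.eq_of_mul_eq_mul_left hpos hfr
  obtain ⟨ef⟩ := hGalF
  have hcardK : Module.finrank F ↥K = d.factorial := by
    rw [← IsGalois.card_aut_eq_finrank, Nat.card_congr ef.toEquiv,
      Nat.card_eq_fintype_card, Fintype.card_perm, Fintype.card_fin]
  -- compositum over K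
  have hKle : K ≤ K ⊔ Kn := le_sup_left
  set ES := IntermediateField.extendScalars hKle with hES
  have hES_eq : ES = IntermediateField.adjoin ↥K ((hb.map (algebraMap F ↥K)).rootSet A) := by
    apply IntermediateField.restrictScalars_injective F
    rw [hES, extendScalars_restrictScalars, restrictScalars_adjoin_eq_sup, hrs2, ← hKn]
  haveI spES : Polynomial.IsSplittingField ↥K ↥ES (hb.map (algebraMap F ↥K)) := by
    rw [hES_eq]
    exact adjoin_rootSet_isSplittingField hsplK
  haveI : FiniteDimensional ↥K ↥ES :=
    Polynomial.IsSplittingField.finiteDimensional ↥ES (hb.map (algebraMap F ↥K))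
  haveI : IsGalois ↥K ↥ES :=
    IsGalois.of_separable_splitting_field (hsepb.map (f := algebraMap F ↥K))
  -- degree bookkeeping
  have hcardESnfr : Module.finrank ↥Kn ↥ESn = d.factorial := by
    rw [← IsGalois.card_aut_eq_finrank, hcardESn]
  -- identity linear equivalence between ES and ESn over F
  have hmemES : ∀ x : A, x ∈ ES ↔ x ∈ ESn := by
    intro x
    constructor
    · intro hx; exact hx
    · intro hx; exact hx
  let ee : ↥ES ≃ₗ[F] ↥ESn :=
  { toFun := fun x => ⟨x.1, (hmemES x.1).mp x.2⟩
    invFun := fun x => ⟨x.1, (hmemES x.1).mpr x.2⟩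
    map_add' := fun x y => rfl
    map_smul' := fun c x => rfl
    left_inv := fun x => rfl
    right_inv := fun x => rfl }
  have hfrES : Module.finrank F ↥ES = Module.finrank F ↥ESn := ee.finrank_eq
  have t3 := Module.finrank_mul_finrank F ↥K ↥ES
  have t4 := Module.finrank_mul_finrank F ↥Kn ↥ESn
  have hfinal : Module.finrank ↥K ↥ES = d.factorial := by
    have hfacpos : 0 < d.factorial := Nat.factorial_pos d
    have hchain : d.factorial * Module.finrank ↥K ↥ES = d.factorial * d.factorial := by
      calc d.factorial * Module.finrank ↥K ↥ES
          = Module.finrank F ↥K * Module.finrank ↥K ↥ES := by rw [hcardK]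
        _ = Module.finrank F ↥ES := t3
        _ = Module.finrank F ↥ESn := hfrES
        _ = Module.finrank F ↥Kn * Module.finrank ↥Kn ↥ESn := t4.symm
        _ = Module.finrank F ↥K * d.factorial := by rw [hfrF, hcardESnfr]
        _ = d.factorial * d.factorial := by rw [hcardK]
    exact Nat.eq_of_mul_eq_mul_left hfacpos hchain
  have hcardES : Nat.card (↥ES ≃ₐ[↥K] ↥ES) = d.factorial := by
    rw [IsGalois.card_aut_eq_finrank, hfinal]
  have hcardGal2 : Nat.card (hb.map (algebraMap F ↥K)).Gal = d.factorial := by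
    have e := Polynomial.IsSplittingField.algEquiv (L := ↥ES) (hb.map (algebraMap F ↥K))
    have h2 : Nat.card (hb.map (algebraMap F ↥K)).Gal = Nat.card (↥ES ≃ₐ[↥K] ↥ES) :=
      (Nat.card_congr (AlgEquiv.autCongr e).toEquiv).symm
    rw [h2, hcardES]
  have hirr2 : Irreducible (hb.map (algebraMap F ↥K)) :=
    aux_core (hsepb.map) hd2 (by rw [natDegree_map, hbdeg]) hcardGal2
  exact ⟨goal1, hirr2⟩
end

section
/- Let p(X) ∈ ℚ[X] be an irreducible polynomial of degree 7 whose Galois group over ℚ is the full symmetric group S_7 on its roots. If x and y are two distinct roots of p in a splitting field, then the subfield ℚ(x + y) contains none of the seven roots of p. -/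
open Polynomial IntermediateField

/-- If `p ∈ ℚ[X]` is irreducible of degree 7 with splitting field `K` whose Galois
group acts as the full symmetric group on the roots of `p`, and `x ≠ y` are roots
of `p`, then `ℚ(x + y)` contains none of the roots of `p`. -/
theorem adjoin_sum_of_two_roots_contains_no_root
    (K : Type*) [Field K] [Algebra ℚ K]
    (p : Polynomial ℚ) (hirr : Irreducible p) (hdeg : p.natDegree = 7)
    [Polynomial.IsSplittingField ℚ K p]
    (hfull : ∀ e : Equiv.Perm {z : K // Polynomial.aeval z p = 0},
      ∃ σ : K ≃ₐ[ℚ] K, ∀ r : {z : K // Polynomial.aeval z p = 0}, σ r = e r)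
    (x y : K) (hx : Polynomial.aeval x p = 0) (hy : Polynomial.aeval y p = 0)
    (hxy : x ≠ y) :
    ∀ z : K, Polynomial.aeval z p = 0 → z ∉ IntermediateField.adjoin ℚ {x + y} := by
  classical
  intro z hz hmem
  have hp0 : p ≠ 0 := hirr.ne_zero
  have hsplits : Splits (p.map (algebraMap ℚ K)) := Polynomial.IsSplittingField.splits K p
  have hsep : p.Separable := hirr.separable
  -- roots finset
  set q := p.map (algebraMap ℚ K) with hq
  have hq0 : q ≠ 0 := Polynomial.map_ne_zero hp0
  have hnodup : q.roots.Nodup := Polynomial.nodup_roots hsep.map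
  have hcard : q.roots.card = 7 := by
    rw [← hdeg, ← Polynomial.natDegree_map (algebraMap ℚ K)]; exact hsplits.natDegree_eq_card_roots.symm
  set s := q.roots.toFinset with hs
  have hscard : s.card = 7 := by
    rw [hs, Multiset.toFinset_card_of_nodup hnodup, hcard]
  -- pick w ∉ {x,y,z}
  have hwex : ∃ w ∈ s, w ≠ x ∧ w ≠ y ∧ w ≠ z := by
    have h1 : (s \ {x, y, z}).Nonempty := by
      rw [← Finset.card_pos]
      have := Finset.card_le_card_sdiff_add_card (s := s) (t := ({x, y, z} : Finset K))
      have h3 : ({x, y, z} : Finset K).card ≤ 3 := by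
        calc ({x, y, z} : Finset K).card ≤ ({y, z} : Finset K).card + 1 :=
              Finset.card_insert_le _ _
          _ ≤ (({z} : Finset K).card + 1) + 1 := by
              gcongr; exact Finset.card_insert_le _ _
          _ ≤ 3 := by simp
      omega
    obtain ⟨w, hw⟩ := h1
    simp only [Finset.mem_sdiff, Finset.mem_insert, Finset.mem_singleton, not_or] at hw
    exact ⟨w, hw.1, hw.2.1, hw.2.2.1, hw.2.2.2⟩
  obtain ⟨w, hws, hwx, hwy, hwz⟩ := hwex
  have hw : Polynomial.aeval w p = 0 := by
    have := Multiset.mem_toFinset.mp hws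
    rw [Polynomial.mem_roots hq0] at this
    simpa [hq, Polynomial.IsRoot, Polynomial.eval_map, Polynomial.aeval_def] using this
  -- root subtype elements
  set R := {z : K // Polynomial.aeval z p = 0}
  let a : R := ⟨x, hx⟩
  let b : R := ⟨y, hy⟩
  let c : R := ⟨z, hz⟩
  let d : R := ⟨w, hw⟩
  -- permutation
  have key : ∃ σ : K ≃ₐ[ℚ] K, σ x = y ∧ σ y = x ∧ σ z ≠ z := by
    by_cases hzx : z = x
    · obtain ⟨σ, hσ⟩ := hfull (Equiv.swap a b)
      refine ⟨σ, ?_, ?_, ?_⟩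
      · have := hσ a; simpa [Equiv.swap_apply_left, a, b] using this
      · have := hσ b; simpa [Equiv.swap_apply_right, a, b] using this
      · have := hσ a
        rw [Equiv.swap_apply_left] at this
        subst hzx
        simp only [a, b] at this
        rw [this]; exact hxy.symm
    · by_cases hzy : z = y
      · obtain ⟨σ, hσ⟩ := hfull (Equiv.swap a b)
        refine ⟨σ, ?_, ?_, ?_⟩
        · have := hσ a; simpa [Equiv.swap_apply_left, a, b] using this
        · have := hσ b; simpa [Equiv.swap_apply_right, a, b] using this
        · have := hσ b
          rw [Equiv.swap_apply_right] at this
          subst hzy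
          simp only [a, b] at this
          rw [this]; exact hxy
      · obtain ⟨σ, hσ⟩ := hfull (Equiv.swap a b * Equiv.swap c d)
        have hax : a ≠ c := fun h => hzx (congrArg Subtype.val h).symm
        have had : a ≠ d := fun h => hwx (congrArg Subtype.val h).symm
        have hbc : b ≠ c := fun h => hzy (congrArg Subtype.val h).symm
        have hbd : b ≠ d := fun h => hwy (congrArg Subtype.val h).symm
        refine ⟨σ, ?_, ?_, ?_⟩
        · have := hσ a
          rw [Equiv.Perm.mul_apply, Equiv.swap_apply_of_ne_of_ne hax had,
            Equiv.swap_apply_left] at this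
          simpa [a, b] using this
        · have := hσ b
          rw [Equiv.Perm.mul_apply, Equiv.swap_apply_of_ne_of_ne hbc hbd,
            Equiv.swap_apply_right] at this
          simpa [a, b] using this
        · have := hσ c
          rw [Equiv.Perm.mul_apply, Equiv.swap_apply_left,
            Equiv.swap_apply_of_ne_of_ne had.symm hbd.symm] at this
          simp only [c, d] at this
          rw [this]; exact hwz
  obtain ⟨σ, hσx, hσy, hσz⟩ := key
  -- σ fixes x + y, hence fixes adjoin ℚ {x+y} pointwise
  have hfix : σ (x + y) = x + y := by rw [map_add, hσx, hσy]; ring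
  have : σ z = z := by
    refine IntermediateField.adjoin_induction (F := ℚ) (s := ({x + y} : Set K))
      (p := fun u _ => σ u = u) ?_ ?_ ?_ ?_ ?_ hmem
    · intro u hu; rw [Set.mem_singleton_iff] at hu; rw [hu]; exact hfix
    · intro r; exact σ.commutes r
    · intro u v _ _ hu hv; rw [map_add, hu, hv]
    · intro u _ hu; rw [map_inv₀, hu]
    · intro u v _ _ hu hv; rw [map_mul, hu, hv]
  exact hσz this
end
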